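/- There is a losing team of every size: for each positive integer s, the team {C_2, C_3, …, C_{s+1}} (which has exactly s elements) is a loser, and the infinite team {C_n : n ≥ 2} is a loser. Indeed, there is a single 2-paving that kills every C_n with n ≥ 2. -/

import Mathlib

/-- A cell of the rectangular board. -/
abbrev Cell : Type := ℤ × ℤ

/-- Two cells are adjacent if they differ by (±1,0) or (0,±1). -/
def Adjacent (a b : Cell) : Prop :=
  (a.1 - b.1).natAbs + (a.2 - b.2).natAbs = 1

/-- A polyomino is a nonempty subset of ℤ² connected through adjacent cells. -/
def IsPolyomino (P : Set Cell) : Prop :=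
  P.Nonempty ∧ ∀ a ∈ P, ∀ b ∈ P,
    Relation.ReflTransGen (fun x y => x ∈ P ∧ y ∈ P ∧ Adjacent x y) a b

/-- Symmetries of the board: compositions of an integer translation with one of the
eight signed/swap linear maps (rotations by multiples of 90° and reflections). -/
def IsSym (f : Cell → Cell) : Prop :=
  ∃ (t : Cell) (a b s : Bool), ∀ p : Cell,
    f p = (t.1 + (if a then (if s then p.2 else p.1) else -(if s then p.2 else p.1)),
           t.2 + (if b then (if s then p.1 else p.2) else -(if s then p.1 else p.2)))

/-- Two subsets of ℤ² are congruent if one is the image of the other under a symmetry. -/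
def CellCongruent (A B : Set Cell) : Prop := ∃ f, IsSym f ∧ f '' A = B

/-- `Ancestor P Q` (written P ⊑ Q): `Q` contains a subset congruent to `P`. -/
def Ancestor (P Q : Set Cell) : Prop := ∃ S, S ⊆ Q ∧ CellCongruent P S

/-- `Simpler S T` (written S ⪯ T): every member of `T` has an ancestor in `S`. -/
def Simpler (S T : Set (Set Cell)) : Prop := ∀ Q ∈ T, ∃ P ∈ S, Ancestor P Q

/-- A team: a set of polyominoes no member of which is an ancestor of another member. -/
def IsTeam (F : Set (Set Cell)) : Prop :=
  (∀ P ∈ F, IsPolyomino P) ∧ ∀ P ∈ F, ∀ Q ∈ F, P ≠ Q → ¬ Ancestor P Q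

/-- The cells marked so far, given the list of the maker's moves and
the list of the breaker's (pairs of) moves. -/
def markedCells (ms : List Cell) (bs : List (Cell × Cell)) : Set Cell :=
  {c | c ∈ ms ∨ ∃ p ∈ bs, c = p.1 ∨ c = p.2}

/-- Maker strategy: from the maker's past moves and the breaker's past moves,
produce the maker's next mark. -/
abbrev MStrategy := List Cell → List (Cell × Cell) → Cell

/-- Breaker strategy: from the maker's moves so far (including his latest one) and the
breaker's past moves, produce the breaker's next two marks. -/
abbrev BStrategy := List Cell → List (Cell × Cell) → Cell × Cell

/-- A legal maker strategy always marks a previously unmarked cell. -/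
def MLegal (σ : MStrategy) : Prop := ∀ ms bs, σ ms bs ∉ markedCells ms bs

/-- A legal breaker strategy always marks two distinct previously unmarked cells. -/
def BLegal (τ : BStrategy) : Prop :=
  ∀ ms bs, (τ ms bs).1 ≠ (τ ms bs).2 ∧
    (τ ms bs).1 ∉ markedCells ms bs ∧ (τ ms bs).2 ∉ markedCells ms bs

/-- The lists of moves after `n` full rounds of the weak (1,2)-achievement game,
the maker moving first in each round. -/
def play (σ : MStrategy) (τ : BStrategy) : ℕ → List Cell × List (Cell × Cell)
  | 0 => ([], [])
  | n + 1 =>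
      let p := play σ τ n
      let mv := σ p.1 p.2
      (p.1 ++ [mv], p.2 ++ [τ (p.1 ++ [mv]) p.2])

/-- The set of cells marked by the maker during the first `n` rounds. -/
def makerSet (σ : MStrategy) (τ : BStrategy) (n : ℕ) : Set Cell :=
  {c | c ∈ (play σ τ n).1}

/-- The maker achieves `F` in the play of `σ` against `τ`: at some finite stage his
marked cells contain a subset congruent to a member of `F`. -/
def Achieves (F : Set (Set Cell)) (σ : MStrategy) (τ : BStrategy) : Prop :=
  ∃ n, ∃ Q ∈ F, Ancestor Q (makerSet σ τ n)

/-- A (bounded) set of polyominoes is a winner of the weak (1,2)-achievement game if the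
maker has a legal strategy achieving it against every legal breaker strategy. -/
def GameWinner (F : Set (Set Cell)) : Prop :=
  ∃ σ, MLegal σ ∧ ∀ τ, BLegal τ → Achieves F σ τ

/-- A set of polyominoes is bounded if all its members are finite. -/
def Bounded (F : Set (Set Cell)) : Prop := ∀ P ∈ F, P.Finite

/-- `G` is a bounded restriction of `T`: `G = {F_P : P ∈ T}` for a choice of a finite
polyomino ancestor `F_P ⊑ P` for each `P ∈ T`. -/
def BoundedRestriction (T G : Set (Set Cell)) : Prop :=
  ∃ f : Set Cell → Set Cell,
    (∀ P ∈ T, (f P).Finite ∧ IsPolyomino (f P) ∧ Ancestor (f P) P) ∧ G = f '' T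

/-- Winner for a possibly unbounded set of polyominoes: a bounded set is a winner if the
maker can achieve it; an unbounded set is a winner if every bounded restriction is. -/
def Winner (F : Set (Set Cell)) : Prop :=
  (Bounded F ∧ GameWinner F) ∨
  (¬ Bounded F ∧ ∀ G, BoundedRestriction F G → GameWinner G)

/-- The skinny polyomino `S_n`: `n` cells in a horizontal row. -/
def Srow (n : ℕ) : Set Cell := {p | 0 ≤ p.1 ∧ p.1 < (n : ℤ) ∧ p.2 = 0}

/-- The one-way infinite skinny polyomino `S_∞`. -/
def Sinf : Set Cell := {p | 0 ≤ p.1 ∧ p.2 = 0}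

/-- The L-tromino `L_2`. -/
def L2 : Set Cell := {(0, 0), (1, 0), (1, 1)}

/-- The L-tetromino `L_3`. -/
def L3 : Set Cell := {(0, 0), (1, 0), (2, 0), (2, 1)}

/-- The T-tetromino `T_2`. -/
def T2 : Set Cell := {(0, 0), (1, 0), (2, 0), (1, 1)}

/-- The 2×2 square tetromino `C_2`. -/
def C2 : Set Cell := {(0, 0), (1, 0), (0, 1), (1, 1)}

/-- The S-tetromino `Z_2`. -/
def Z2 : Set Cell := {(0, 0), (1, 0), (1, 1), (2, 1)}

/-- `C_n`: a horizontal row of `n` cells plus the cells above its two end cells. -/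
def Cpoly (n : ℕ) : Set Cell :=
  {p | 0 ≤ p.1 ∧ p.1 < (n : ℤ) ∧ p.2 = 0} ∪ {(0, 1), ((n : ℤ) - 1, 1)}

/-- `Z_n`: a horizontal row of `n` cells plus the cell above one end cell and the cell
below the other end cell. -/
def Zpoly (n : ℕ) : Set Cell :=
  {p | 0 ≤ p.1 ∧ p.1 < (n : ℤ) ∧ p.2 = 0} ∪ {(0, 1), ((n : ℤ) - 1, -1)}

/-- A polyomino is skinny if all its cells lie in one row or one column. -/
def Skinny (P : Set Cell) : Prop :=
  (∃ r, ∀ p ∈ P, p.2 = r) ∨ (∃ c, ∀ p ∈ P, p.1 = c)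

/-- A 2-paving: an irreflexive symmetric relation on cells in which every cell is
related to at most two other cells. -/
def TwoPaving (R : Cell → Cell → Prop) : Prop :=
  (∀ a, ¬ R a a) ∧ (∀ a b, R a b → R b a) ∧
  ∀ a, ∃ b c, ∀ d, R a d → d = b ∨ d = c

/-- The paving strategy based on `R`: a legal breaker strategy that marks every currently
unmarked cell related by `R` to the maker's last move. -/
def PavingStrategy (R : Cell → Cell → Prop) (τ : BStrategy) : Prop :=
  BLegal τ ∧ ∀ ms bs, ∀ last ∈ ms.getLast?, ∀ c, R last c →
    c ∉ markedCells ms bs → (c = (τ ms bs).1 ∨ c = (τ ms bs).2)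

/-- `Q` is killed by `R`: every subset of ℤ² congruent to `Q` contains two related cells. -/
def Killed (R : Cell → Cell → Prop) (Q : Set Cell) : Prop :=
  ∀ S : Set Cell, CellCongruent Q S → ∃ a ∈ S, ∃ b ∈ S, R a b

/-- The unbounded team `W = {S_∞, T_2} ∪ {C_n : n ≥ 2} ∪ {Z_n : n ≥ 2}`. -/
def Wteam : Set (Set Cell) :=
  {Sinf, T2} ∪ {P | ∃ n, 2 ≤ n ∧ P = Cpoly n} ∪ {P | ∃ n, 2 ≤ n ∧ P = Zpoly n}

/-!
Relate each cell with even coordinate sum to its right and upper neighbours. This is a 2-paving,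
and it kills every `C_n`: a congruent copy of `C_n` contains either three consecutive collinear
cells (`n ≥ 3`) or a 2×2 square (`n = 2`), hence two adjacent pairs whose smaller coordinate sums
differ by one, and the pair with the even one is related. Against any 2-paving the breaker answers
each move of the maker by marking its (at most two) still unmarked partners; then no two cells of
the maker are ever related, so the maker never completes a killed polyomino.
-/

lemma markedCells_finite (ms : List Cell) (bs : List (Cell × Cell)) :
    (markedCells ms bs).Finite := by
  refine (ms ++ bs.flatMap fun p => [p.1, p.2]).finite_toSet.subset ?_
  rintro c (hc | ⟨p, hp, hcp⟩)
  · simp [hc]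
  · simp only [Set.mem_ofPred_eq, List.mem_append, List.mem_flatMap]
    exact Or.inr ⟨p, hp, by simpa using hcp⟩

lemma markedCells_mono {ms ms' : List Cell} {bs bs' : List (Cell × Cell)}
    (hms : ms ⊆ ms') (hbs : bs ⊆ bs') : markedCells ms bs ⊆ markedCells ms' bs' := by
  rintro c (hc | ⟨p, hp, hcp⟩)
  · exact Or.inl (hms hc)
  · exact Or.inr ⟨p, hbs hp, hcp⟩

lemma mem_markedCells_append_breaker (ms : List Cell) (bs : List (Cell × Cell))
    {t : Cell × Cell} {c : Cell} (h : c = t.1 ∨ c = t.2) : c ∈ markedCells ms (bs ++ [t]) :=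
  Or.inr ⟨t, List.mem_append_right _ (List.mem_singleton_self t), h⟩

lemma exists_pair_notMem_cover {α : Type*} [Infinite α] {M : Set α} (hM : M.Finite)
    (b c : α) : ∃ p q, p ≠ q ∧ p ∉ M ∧ q ∉ M ∧ ∀ d, (d = b ∨ d = c) → d ∉ M → d = p ∨ d = q := by
  classical
  obtain ⟨u, hu⟩ := (hM.union (Set.toFinite {b, c})).exists_notMem
  obtain ⟨v, hv⟩ := (hM.union (Set.toFinite {b, c, u})).exists_notMem
  refine ⟨if b ∈ M then u else b, if c ∈ M ∨ c = b then v else c, ?_⟩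
  simp only [Set.mem_union, Set.mem_insert_iff, Set.mem_singleton_iff, not_or] at hu hv
  split_ifs <;> grind

lemma TwoPaving.exists_pavingStrategy {R : Cell → Cell → Prop} (hR : TwoPaving R) :
    ∃ τ, PavingStrategy R τ := by
  have hmove : ∀ ms bs, ∃ t : Cell × Cell, t.1 ≠ t.2 ∧ t.1 ∉ markedCells ms bs ∧
      t.2 ∉ markedCells ms bs ∧ ∀ last ∈ ms.getLast?, ∀ c, R last c →
        c ∉ markedCells ms bs → c = t.1 ∨ c = t.2 := by
    intro ms bs
    obtain ⟨b, c, hpartners⟩ := hR.2.2 (ms.getLast?.getD (0, 0))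
    obtain ⟨p, q, hpq, hp, hq, hcover⟩ := exists_pair_notMem_cover (markedCells_finite ms bs) b c
    refine ⟨(p, q), hpq, hp, hq, fun last hlast d hd => hcover d (hpartners d ?_)⟩
    rwa [Option.mem_def.1 hlast, Option.getD_some]
  choose τ hτ using hmove
  exact ⟨τ, fun ms bs => ⟨(hτ ms bs).1, (hτ ms bs).2.1, (hτ ms bs).2.2.1⟩,
    fun ms bs => (hτ ms bs).2.2.2⟩

section Paving

variable {R : Cell → Cell → Prop} {σ : MStrategy} {τ : BStrategy}

lemma PavingStrategy.related_mem_markedCells (hτ : PavingStrategy R τ) (n : ℕ) :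
    ∀ x ∈ (play σ τ n).1, ∀ c, R x c → c ∈ markedCells (play σ τ n).1 (play σ τ n).2 := by
  induction n with
  | zero => simp [play]
  | succ k ih =>
    intro x hx c hxc
    set ms := (play σ τ k).1
    set bs := (play σ τ k).2
    have hmono : markedCells ms bs ⊆
        markedCells (ms ++ [σ ms bs]) (bs ++ [τ (ms ++ [σ ms bs]) bs]) :=
      markedCells_mono (List.subset_append_left _ _) (List.subset_append_left _ _)
    simp only [play, List.mem_append, List.mem_singleton] at hx ⊢
    rcases hx with hold | rfl
    · exact hmono (ih x hold c hxc)
    · by_cases hc : c ∈ markedCells (ms ++ [σ ms bs]) bs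
      · exact markedCells_mono (List.Subset.refl _) (List.subset_append_left _ _) hc
      · exact mem_markedCells_append_breaker _ _
          (hτ.2 _ _ _ List.getLast?_concat c hxc hc)

lemma PavingStrategy.not_related_of_mem_play (hirrefl : ∀ a, ¬ R a a)
    (hsymm : ∀ a b, R a b → R b a) (hσ : MLegal σ) (hτ : PavingStrategy R τ) (n : ℕ) :
    ∀ x ∈ (play σ τ n).1, ∀ y ∈ (play σ τ n).1, ¬ R x y := by
  induction n with
  | zero => simp [play]
  | succ k ih =>
    intro x hx y hy hxy
    simp only [play, List.mem_append, List.mem_singleton] at hx hy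
    rcases hx with hx | rfl <;> rcases hy with hy | rfl
    · exact ih x hx y hy hxy
    · exact hσ _ _ (hτ.related_mem_markedCells k x hx _ hxy)
    · exact hσ _ _ (hτ.related_mem_markedCells k y hy _ (hsymm _ _ hxy))
    · exact hirrefl _ hxy

end Paving

theorem TwoPaving.not_gameWinner {R : Cell → Cell → Prop} (hR : TwoPaving R)
    {F : Set (Set Cell)} (hF : ∀ Q ∈ F, Killed R Q) : ¬ GameWinner F := by
  rintro ⟨σ, hσ, hwin⟩
  obtain ⟨τ, hτ⟩ := hR.exists_pavingStrategy
  obtain ⟨n, Q, hQ, S, hSsub, hcong⟩ := hwin τ hτ.1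
  obtain ⟨x, hx, y, hy, hxy⟩ := hF Q hQ S hcong
  exact hτ.not_related_of_mem_play hR.1 hR.2.1 hσ n x (hSsub hx) y (hSsub hy) hxy

/-- Each cell with even coordinate sum is related to its right and upper neighbours. -/
def evenPaving (p q : Cell) : Prop :=
  Adjacent p q ∧ min (p.1 + p.2) (q.1 + q.2) % 2 = 0

lemma evenPaving_twoPaving : TwoPaving evenPaving := by
  refine ⟨fun a h => by simp [evenPaving, Adjacent] at h, fun a b h => ?_, fun a => ?_⟩
  · unfold evenPaving Adjacent at *; omega
  by_cases ha : (a.1 + a.2) % 2 = 0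
  · refine ⟨(a.1 + 1, a.2), (a.1, a.2 + 1), fun d hd => ?_⟩
    unfold evenPaving Adjacent at hd; simp only [Prod.ext_iff]; omega
  · refine ⟨(a.1 - 1, a.2), (a.1, a.2 - 1), fun d hd => ?_⟩
    unfold evenPaving Adjacent at hd; simp only [Prod.ext_iff]; omega

lemma IsSym.adjacent {f : Cell → Cell} (hf : IsSym f) {p q : Cell} (h : Adjacent p q) :
    Adjacent (f p) (f q) := by
  obtain ⟨t, a, b, s, hf⟩ := hf
  unfold Adjacent at *
  rw [hf, hf]
  cases a <;> cases b <;> cases s <;> simp only [Bool.false_eq_true, if_true, if_false] <;> omega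

lemma IsSym.exists_coord_sum_eq {f : Cell → Cell} (hf : IsSym f) : ∃ c d₁ d₂ : ℤ,
    (d₁ = 1 ∨ d₁ = -1) ∧ (d₂ = 1 ∨ d₂ = -1) ∧ ∀ p, (f p).1 + (f p).2 = c + d₁ * p.1 + d₂ * p.2 := by
  obtain ⟨t, a, b, s, hf⟩ := hf
  simp only [hf]
  cases a <;> cases b <;> cases s <;> simp only [Bool.false_eq_true, if_true, if_false]
  all_goals refine ⟨t.1 + t.2, ?_⟩
  all_goals first
    | (refine ⟨1, 1, .inl rfl, .inl rfl, fun p => ?_⟩; ring1)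
    | (refine ⟨1, -1, .inl rfl, .inr rfl, fun p => ?_⟩; ring1)
    | (refine ⟨-1, 1, .inr rfl, .inl rfl, fun p => ?_⟩; ring1)
    | (refine ⟨-1, -1, .inr rfl, .inr rfl, fun p => ?_⟩; ring1)

lemma IsSym.evenPaving_row {f : Cell → Cell} (hf : IsSym f) (x y : ℤ) :
    evenPaving (f (x, y)) (f (x + 1, y)) ∨ evenPaving (f (x + 1, y)) (f (x + 2, y)) := by
  have h₁ := hf.adjacent (p := (x, y)) (q := (x + 1, y)) (by simp [Adjacent])
  have h₂ := hf.adjacent (p := (x + 1, y)) (q := (x + 2, y)) (by simp [Adjacent])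
  obtain ⟨c, d₁, d₂, hd₁, hd₂, hsum⟩ := hf.exists_coord_sum_eq
  have := hsum (x, y); have := hsum (x + 1, y); have := hsum (x + 2, y)
  unfold evenPaving Adjacent at *
  rcases hd₁ with rfl | rfl <;> rcases hd₂ with rfl | rfl <;> omega

lemma IsSym.evenPaving_square {f : Cell → Cell} (hf : IsSym f) (x y : ℤ) :
    evenPaving (f (x, y)) (f (x + 1, y)) ∨ evenPaving (f (x, y + 1)) (f (x + 1, y + 1)) := by
  have h₁ := hf.adjacent (p := (x, y)) (q := (x + 1, y)) (by simp [Adjacent])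
  have h₂ := hf.adjacent (p := (x, y + 1)) (q := (x + 1, y + 1)) (by simp [Adjacent])
  obtain ⟨c, d₁, d₂, hd₁, hd₂, hsum⟩ := hf.exists_coord_sum_eq
  have := hsum (x, y); have := hsum (x + 1, y)
  have := hsum (x, y + 1); have := hsum (x + 1, y + 1)
  unfold evenPaving Adjacent at *
  rcases hd₁ with rfl | rfl <;> rcases hd₂ with rfl | rfl <;> omega

lemma killed_evenPaving_Cpoly {n : ℕ} (hn : 2 ≤ n) : Killed evenPaving (Cpoly n) := by
  rintro S ⟨f, hf, rfl⟩
  have hmem : ∀ x y : ℤ, ((0 ≤ x ∧ x < n ∧ y = 0) ∨ ((x = 0 ∨ x = n - 1) ∧ y = 1)) →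
      f (x, y) ∈ f '' Cpoly n := by
    intro x y hxy
    refine Set.mem_image_of_mem f ?_
    simp only [Cpoly, Set.mem_union, Set.mem_insert_iff, Set.mem_singleton_iff, Prod.ext_iff]
    grind
  obtain rfl | hn3 := hn.eq_or_lt
  · rcases hf.evenPaving_square 0 0 with h | h
    · exact ⟨_, hmem 0 0 (by omega), _, hmem (0 + 1) 0 (by omega), h⟩
    · exact ⟨_, hmem 0 (0 + 1) (by omega), _, hmem (0 + 1) (0 + 1) (by omega), h⟩
  · rcases hf.evenPaving_row 0 0 with h | h
    · exact ⟨_, hmem 0 0 (by omega), _, hmem (0 + 1) 0 (by omega), h⟩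
    · exact ⟨_, hmem (0 + 1) 0 (by omega), _, hmem (0 + 2) 0 (by omega), h⟩

lemma adjacent_comm {p q : Cell} : Adjacent p q ↔ Adjacent q p := by
  unfold Adjacent; omega

lemma isPolyomino_of_forall_reflTransGen {P : Set Cell} {o : Cell} (ho : o ∈ P)
    (h : ∀ a ∈ P, Relation.ReflTransGen (fun x y => x ∈ P ∧ y ∈ P ∧ Adjacent x y) a o) :
    IsPolyomino P := by
  refine ⟨⟨o, ho⟩, fun a ha b hb => (h a ha).trans ?_⟩
  have : Std.Symm fun x y => x ∈ P ∧ y ∈ P ∧ Adjacent x y :=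
    ⟨fun _ _ ⟨hx, hy, hxy⟩ => ⟨hy, hx, adjacent_comm.1 hxy⟩⟩
  exact Std.Symm.symm _ _ (h b hb)

lemma mem_Cpoly_row {n : ℕ} {x : ℤ} (h₀ : 0 ≤ x) (hn : x < n) : (x, 0) ∈ Cpoly n :=
  Or.inl ⟨h₀, hn, rfl⟩

lemma isPolyomino_Cpoly {n : ℕ} (hn : 2 ≤ n) : IsPolyomino (Cpoly n) := by
  have hrow : ∀ x : ℤ, 0 ≤ x → x < n → Relation.ReflTransGen
      (fun p q => p ∈ Cpoly n ∧ q ∈ Cpoly n ∧ Adjacent p q) (x, 0) (0, 0) := by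
    intro x hx
    induction x, hx using Int.leInduction with
    | base => exact fun _ => .refl
    | succ x hx ih =>
      refine fun hxn => .head ⟨mem_Cpoly_row (by omega) hxn, mem_Cpoly_row hx (by omega), ?_⟩
        (ih (by omega))
      simp [Adjacent]
  refine isPolyomino_of_forall_reflTransGen (mem_Cpoly_row le_rfl (by omega)) ?_
  rintro ⟨x, y⟩ ((⟨hx₀, hxn, rfl⟩ : 0 ≤ x ∧ x < n ∧ y = 0) | hear)
  · exact hrow x hx₀ hxn
  · obtain ⟨hx, rfl⟩ : (x = 0 ∨ x = n - 1) ∧ y = 1 := by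
      simpa [Prod.ext_iff, or_and_right] using hear
    have hx' : 0 ≤ x ∧ x < n := by omega
    exact .head ⟨Or.inr hear, mem_Cpoly_row hx'.1 hx'.2, by simp [Adjacent]⟩ (hrow x hx'.1 hx'.2)

lemma isSym_id : IsSym id := ⟨(0, 0), true, true, false, fun p => by simp⟩

lemma ancestor_refl (P : Set Cell) : Ancestor P P :=
  ⟨P, subset_rfl, id, isSym_id, Set.image_id P⟩

lemma not_ancestor_Cpoly {m n : ℕ} (hm : 2 ≤ m) (hn : 2 ≤ n) (hmn : m ≠ n) :
    ¬ Ancestor (Cpoly m) (Cpoly n) := by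
  -- The corners and ears of `C_m` have nowhere to go in `C_n` under any of the eight symmetries.
  rintro ⟨S, hSn, f, ⟨t, a, b, s, hf⟩, rfl⟩
  have himg : ∀ x ∈ Cpoly m, f x ∈ Cpoly n := fun x hx => hSn (Set.mem_image_of_mem f hx)
  have h₁ := himg (0, 0) (mem_Cpoly_row le_rfl (by omega))
  have h₂ := himg (1, 0) (mem_Cpoly_row zero_le_one (by omega))
  have h₃ := himg (m - 1, 0) (mem_Cpoly_row (by omega) (by omega))
  have h₄ := himg (0, 1) (Or.inr (Or.inl rfl))
  have h₅ := himg (m - 1, 1) (Or.inr (Or.inr rfl))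
  rw [hf] at h₁ h₂ h₃ h₄ h₅
  cases a <;> cases b <;> cases s <;> simp [Cpoly, Prod.ext_iff] at h₁ h₂ h₃ h₄ h₅ <;> omega

lemma Cpoly_inj {m n : ℕ} (hm : 2 ≤ m) (hn : 2 ≤ n) (h : Cpoly m = Cpoly n) : m = n := by
  by_contra hmn
  exact not_ancestor_Cpoly hm hn hmn (h ▸ ancestor_refl (Cpoly m))

lemma IsTeam.mono {F G : Set (Set Cell)} (hF : IsTeam F) (hGF : G ⊆ F) : IsTeam G :=
  ⟨fun P hP => hF.1 P (hGF hP), fun P hP Q hQ => hF.2 P (hGF hP) Q (hGF hQ)⟩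

lemma isTeam_Cpoly : IsTeam {P | ∃ n, 2 ≤ n ∧ P = Cpoly n} := by
  refine ⟨?_, ?_⟩
  · rintro _ ⟨n, hn, rfl⟩
    exact isPolyomino_Cpoly hn
  · rintro _ ⟨m, hm, rfl⟩ _ ⟨n, hn, rfl⟩ hne
    exact not_ancestor_Cpoly hm hn (fun h => hne (h ▸ rfl))

lemma encard_Cpoly_le (s : ℕ) : {P | ∃ n, 2 ≤ n ∧ n ≤ s + 1 ∧ P = Cpoly n}.encard = s := by
  have himage : {P | ∃ n, 2 ≤ n ∧ n ≤ s + 1 ∧ P = Cpoly n} = Cpoly '' Set.Icc 2 (s + 1) := by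
    ext P
    simp only [Set.mem_ofPred_eq, Set.mem_image, Set.mem_Icc, and_assoc, eq_comm]
  have hinj : Set.InjOn Cpoly (Set.Icc 2 (s + 1)) := fun m hm n hn h => Cpoly_inj hm.1 hn.1 h
  rw [himage, hinj.encard_image, ← Finset.coe_Icc, Set.encard_coe_eq_coe_finsetCard, Nat.card_Icc,
    Nat.add_sub_add_right s 2 0, Nat.sub_zero]

/-- there is a losing team of every size: for each `s ≥ 1` the team
`{C_2, …, C_{s+1}}` has exactly `s` elements and is a loser, the infinite team
`{C_n : n ≥ 2}` is a loser, and a single 2-paving kills every `C_n` with `n ≥ 2`. -/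
theorem stmt9 :
    (∀ s : ℕ, 1 ≤ s →
      IsTeam {P | ∃ n, 2 ≤ n ∧ n ≤ s + 1 ∧ P = Cpoly n} ∧
      Set.encard {P | ∃ n, 2 ≤ n ∧ n ≤ s + 1 ∧ P = Cpoly n} = (s : ℕ∞) ∧
      ¬ GameWinner {P | ∃ n, 2 ≤ n ∧ n ≤ s + 1 ∧ P = Cpoly n}) ∧
    (IsTeam {P | ∃ n, 2 ≤ n ∧ P = Cpoly n} ∧
      ¬ GameWinner {P | ∃ n, 2 ≤ n ∧ P = Cpoly n}) ∧
    (∃ R, TwoPaving R ∧ ∀ n, 2 ≤ n → Killed R (Cpoly n)) := by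
  have hsub (s : ℕ) :
      {P | ∃ n, 2 ≤ n ∧ n ≤ s + 1 ∧ P = Cpoly n} ⊆ {P | ∃ n, 2 ≤ n ∧ P = Cpoly n} :=
    fun _ ⟨n, hn, _, hP⟩ => ⟨n, hn, hP⟩
  have hkilled : ∀ Q ∈ {P | ∃ n, 2 ≤ n ∧ P = Cpoly n}, Killed evenPaving Q := by
    rintro _ ⟨n, hn, rfl⟩
    exact killed_evenPaving_Cpoly hn
  refine ⟨fun s _ => ⟨isTeam_Cpoly.mono (hsub s), encard_Cpoly_le s, ?_⟩,
    ⟨isTeam_Cpoly, evenPaving_twoPaving.not_gameWinner hkilled⟩,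
    evenPaving, evenPaving_twoPaving, fun n hn => killed_evenPaving_Cpoly hn⟩
  exact evenPaving_twoPaving.not_gameWinner fun Q hQ => hkilled Q (hsub s hQ)
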